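/- Let t₁, x₁, X₁₁ ∈ ℝ with t₁ ≥ 0, and set s₁ := 1 − x₁ − t₁, Z₁₁ := x₁ − X₁₁, and S₁₁ := 1 + X₁₁ − 2x₁ − t₁. Then the 4×4 symmetric matrix W = [[1, x₁, s₁, t₁], [x₁, X₁₁, Z₁₁, 0], [s₁, Z₁₁, S₁₁, 0], [t₁, 0, 0, t₁]] is positive semidefinite if and only if the 2×2 matrix [[1−t₁, x₁], [x₁, X₁₁]] is positive semidefinite, equivalently if and only if 1−t₁ ≥ 0, X₁₁ ≥ 0, and (1−t₁)·X₁₁ ≥ x₁². -/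

import Mathlib

/-!
Write `M = !![1 - t, x; x, X]`. The quadratic form of `W` at `v` is
`M(v₀ + v₂, v₁ - v₂) + t (v₀ + v₃)²`, i.e. `W = Bᵀ M B + t w wᵀ` with `B v = (v₀ + v₂, v₁ - v₂)`
and `w = (1, 0, 0, 1)`, so `W` is positive semidefinite as soon as `M` is and `t ≥ 0`. Conversely
`M = Cᵀ W C`, where `C` sends `(y₀, y₁)` to `(y₀, y₁, 0, -y₀)`, a vector on which the rank-one
term vanishes. The last equivalence is the diagonal-and-determinant test for `2 × 2` matrices.
-/

open Matrix

section Identities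

variable {R : Type*} [CommRing R]

def liftMatrix (t x X : R) : Matrix (Fin 4) (Fin 4) R :=
  !![1, x, 1 - x - t, t;
     x, X, x - X, 0;
     1 - x - t, x - X, 1 + X - 2 * x - t, 0;
     t, 0, 0, t]

theorem liftMatrix_eq (t x X : R) :
    liftMatrix t x X =
      (!![1, 0, 1, 0; 0, 1, -1, 0] : Matrix (Fin 2) (Fin 4) R)ᵀ * !![1 - t, x; x, X] *
          (!![1, 0, 1, 0; 0, 1, -1, 0] : Matrix (Fin 2) (Fin 4) R) +
        t • vecMulVec ![1, 0, 0, 1] ![1, 0, 0, 1] := by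
  ext i j
  fin_cases i <;> fin_cases j <;>
    simp [liftMatrix, vecMulVec, mul_apply, Fin.sum_univ_succ] <;> ring

theorem eq_compress_liftMatrix (t x X : R) :
    !![1 - t, x; x, X] =
      (!![1, 0; 0, 1; 0, 0; -1, 0] : Matrix (Fin 4) (Fin 2) R)ᵀ * liftMatrix t x X *
        (!![1, 0; 0, 1; 0, 0; -1, 0] : Matrix (Fin 4) (Fin 2) R) := by
  ext i j
  fin_cases i <;> fin_cases j <;> simp [liftMatrix, mul_apply, Fin.sum_univ_succ]
  ring

end Identities

theorem posSemidef_fin_two_iff (a b c : ℝ) :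
    (!![a, b; b, c] : Matrix (Fin 2) (Fin 2) ℝ).PosSemidef ↔ 0 ≤ a ∧ 0 ≤ c ∧ b ^ 2 ≤ a * c := by
  constructor
  · intro h
    have hdet := h.det_nonneg
    rw [det_fin_two_of] at hdet
    exact ⟨by simpa using h.diag_nonneg (i := 0), by simpa using h.diag_nonneg (i := 1),
      by nlinarith⟩
  · rintro ⟨ha, hc, hb⟩
    refine .of_dotProduct_mulVec_nonneg ?_ fun v => ?_
    · ext i j
      fin_cases i <;> fin_cases j <;> rfl
    · have hquad : 0 ≤ a * v 0 ^ 2 + 2 * b * v 0 * v 1 + c * v 1 ^ 2 := by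
        rcases ha.eq_or_lt with rfl | ha
        · obtain rfl : b = 0 := by nlinarith
          nlinarith [sq_nonneg (v 1)]
        · -- `a · (quadratic form) = (a v₀ + b v₁)² + (ac - b²) v₁²`
          nlinarith [sq_nonneg (a * v 0 + b * v 1), sq_nonneg (v 1)]
      simp only [dotProduct, Pi.star_apply, star_trivial, mulVec, of_apply, cons_val',
        cons_val_fin_one, Fin.sum_univ_two, cons_val_zero, cons_val_one]
      linarith

theorem posSemidef_liftMatrix_iff (t x X : ℝ) (ht : 0 ≤ t) :
    (liftMatrix t x X).PosSemidef ↔ (!![1 - t, x; x, X] : Matrix (Fin 2) (Fin 2) ℝ).PosSemidef := by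
  constructor
  · intro hW
    rw [eq_compress_liftMatrix t x X, ← conjTranspose_eq_transpose_of_trivial]
    exact hW.conjTranspose_mul_mul_same _
  · intro hM
    have hw := posSemidef_vecMulVec_self_star (![1, 0, 0, 1] : Fin 4 → ℝ)
    rw [star_trivial] at hw
    rw [liftMatrix_eq, ← conjTranspose_eq_transpose_of_trivial]
    exact (hM.conjTranspose_mul_mul_same _).add (hw.smul ht)

theorem stmt2 (t₁ x₁ X₁₁ : ℝ) (ht : 0 ≤ t₁) :
    ((!![1, x₁, 1 - x₁ - t₁, t₁;
         x₁, X₁₁, x₁ - X₁₁, 0;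
         1 - x₁ - t₁, x₁ - X₁₁, 1 + X₁₁ - 2 * x₁ - t₁, 0;
         t₁, 0, 0, t₁] : Matrix (Fin 4) (Fin 4) ℝ).PosSemidef ↔
      (!![1 - t₁, x₁; x₁, X₁₁] : Matrix (Fin 2) (Fin 2) ℝ).PosSemidef) ∧
    ((!![1 - t₁, x₁; x₁, X₁₁] : Matrix (Fin 2) (Fin 2) ℝ).PosSemidef ↔
      (1 - t₁ ≥ 0 ∧ X₁₁ ≥ 0 ∧ (1 - t₁) * X₁₁ ≥ x₁ ^ 2)) :=
  ⟨posSemidef_liftMatrix_iff t₁ x₁ X₁₁ ht, posSemidef_fin_two_iff _ _ _⟩
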